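/- For r = 1,...,n, let Γ_r denote the connected component of {x ∈ ℝ^n : σ_r(x) ≠ 0} containing the vector (1,...,1). Then Γ_1 ⊃ Γ_2 ⊃ ... ⊃ Γ_n, i.e., the Gårding cones are nested decreasingly. -/

import Mathlib

open Finset

/-- The `r`-th elementary symmetric polynomial of `x ∈ ℝⁿ` (with `σ_0 = 1`). -/
noncomputable def esym (n r : ℕ) (x : Fin n → ℝ) : ℝ :=
  ∑ s ∈ (Finset.univ : Finset (Fin n)).powersetCard r, ∏ i ∈ s, x i

/-- The Gårding cone `Γ_r`: the connected component of `{x : σ_r(x) ≠ 0}` containing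
the vector `(1, ..., 1)`. -/
def GardingCone (n r : ℕ) : Set (Fin n → ℝ) :=
  connectedComponentIn {x : Fin n → ℝ | esym n r x ≠ 0} (fun _ => (1 : ℝ))

/-!
On `Γ_s` all of `σ_0, …, σ_s` are positive: the set where they are is open, and it is closed in
`{σ_s ≠ 0}`. Indeed, for `x` in its closure the polynomial `t ↦ σ_s(x + t • 1)` has the
coefficients `C(n - s + i, i) σ_{s-i}(x) ≥ 0` and, being a derivative of `∏ (t + x_i)`, only real
roots; if `σ_s(x) > 0` these roots are negative, which forces all coefficients to be positive.
Conversely, the set where `σ_0, …, σ_r` are positive is a cone, stable under adding `t • 1` for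
`t ≥ 0` (again by the coefficient formula), hence star-shaped about `1`; as it lies in
`{σ_r ≠ 0}`, it lies in `Γ_r`.
-/

open Polynomial

theorem Multiset.esymm_pos {R : Type*} [CommSemiring R] [PartialOrder R] [IsStrictOrderedRing R]
    {s : Multiset R} (hs : ∀ a ∈ s, 0 < a) {k : ℕ} (hk : k ≤ card s) : 0 < s.esymm k := by
  have hne : powersetCard k s ≠ 0 := by
    rw [← card_pos, card_powersetCard]
    exact Nat.choose_pos hk
  simpa [esymm] using sum_lt_sum_of_nonempty (f := fun _ => 0) (g := prod) hne
    fun t ht => prod_pos fun a ha => hs a (mem_of_le (mem_powersetCard.1 ht).1 ha)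

namespace Polynomial

theorem eval_pos_of_coeff_nonneg {R : Type*} [Semiring R] [PartialOrder R] [IsStrictOrderedRing R]
    {p : R[X]} (hp : ∀ i, 0 ≤ p.coeff i) (h0 : 0 < p.coeff 0) {t : R} (ht : 0 ≤ t) :
    0 < p.eval t := by
  rw [eval_eq_sum_range]
  exact Finset.sum_pos' (fun i _ => mul_nonneg (hp i) (pow_nonneg ht i))
    ⟨0, by simp, by simpa using h0⟩

theorem Splits.derivative_real {p : ℝ[X]} (hp : p.Splits) : (derivative p).Splits := by
  rw [splits_iff_card_roots] at hp ⊢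
  have := card_roots_le_derivative p
  have := card_roots' (derivative p)
  have := natDegree_derivative_le p
  omega

theorem Splits.hasseDeriv_real {p : ℝ[X]} (hp : p.Splits) (k : ℕ) : (hasseDeriv k p).Splits := by
  have hiter : (derivative^[k] p).Splits := by
    induction k with
    | zero => exact hp
    | succ k ih => exact Function.iterate_succ_apply' derivative k p ▸ ih.derivative_real
  have hfac : derivative^[k] p = C (k.factorial : ℝ) * hasseDeriv k p := by
    rw [← factorial_smul_hasseDeriv, LinearMap.smul_apply, C_mul', Nat.cast_smul_eq_nsmul]
  rwa [hfac, splits_mul_iff_right (by simp [Nat.factorial_ne_zero]) (Splits.C _)] at hiter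

/-- The roots are negative, so by Vieta each coefficient is a positive multiple of an elementary
symmetric function of positive numbers. -/
theorem Splits.coeff_pos_of_coeff_nonneg {p : ℝ[X]} (hp : p.Splits) (hnn : ∀ i, 0 ≤ p.coeff i)
    (h0 : 0 < p.coeff 0) {k : ℕ} (hk : k ≤ p.natDegree) : 0 < p.coeff k := by
  have hp0 : p ≠ 0 := by rintro rfl; simp at h0
  have hroots : ∀ a ∈ p.roots, a < 0 := fun a ha => not_le.1 fun ha' =>
    (eval_pos_of_coeff_nonneg hnn h0 ha').ne' ((mem_roots hp0).1 ha).eq_zero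
  have hlc : 0 < p.leadingCoeff := (hnn _).lt_of_ne' (leadingCoeff_ne_zero.2 hp0)
  rw [coeff_eq_esymm_roots_of_splits hp hk, mul_assoc, ← Multiset.esymm_neg]
  refine mul_pos hlc (Multiset.esymm_pos ?_ ?_)
  · intro a ha
    obtain ⟨b, hb, rfl⟩ := Multiset.mem_map.1 ha
    exact neg_pos.2 (hroots b hb)
  · rw [Multiset.card_map, ← hp.natDegree_eq_card_roots]
    exact Nat.sub_le _ _

end Polynomial

section esym

variable {n : ℕ}

theorem continuous_esym (n k : ℕ) : Continuous (esym n k) := by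
  unfold esym
  fun_prop

theorem esym_one (k : ℕ) : esym n k 1 = n.choose k := by
  simp [esym]

theorem esym_smul (k : ℕ) (c : ℝ) (x : Fin n → ℝ) : esym n k (c • x) = c ^ k * esym n k x := by
  rw [esym, esym, mul_sum]
  refine sum_congr rfl fun s hs => ?_
  simp only [Pi.smul_apply, smul_eq_mul, prod_mul_distrib, prod_const, (mem_powersetCard.1 hs).2]

theorem coeff_prod_X_add_C_eq_esym {k : ℕ} (hk : k ≤ n) (x : Fin n → ℝ) :
    (∏ i, (X + C (x i))).coeff (n - k) = esym n k x := by
  rw [Finset.prod_X_add_C_coeff _ _ (by simp), card_univ, Fintype.card_fin, Nat.sub_sub_self hk,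
    esym]

theorem natDegree_prod_X_add_C (x : Fin n → ℝ) : (∏ i, (X + C (x i))).natDegree = n := by
  simp [natDegree_prod_of_monic _ _ fun i _ => monic_X_add_C (x i)]

/-- The `(n - k)`-th Hasse derivative of `∏ i, (X + x i)`. By Taylor's formula it is the
polynomial `t ↦ σ_k(x + t • 1)` (`eval_esymShift`), and by Rolle's theorem it has only real
roots. -/
noncomputable def esymShift (n k : ℕ) (x : Fin n → ℝ) : ℝ[X] :=
  hasseDeriv (n - k) (∏ i, (X + C (x i)))

theorem coeff_esymShift {k i : ℕ} (hk : k ≤ n) (hi : i ≤ k) (x : Fin n → ℝ) :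
    (esymShift n k x).coeff i = ((i + (n - k)).choose (n - k) : ℝ) * esym n (k - i) x := by
  rw [esymShift, hasseDeriv_coeff, show i + (n - k) = n - (k - i) by omega,
    coeff_prod_X_add_C_eq_esym (by omega)]

theorem coeff_zero_esymShift {k : ℕ} (hk : k ≤ n) (x : Fin n → ℝ) :
    (esymShift n k x).coeff 0 = esym n k x := by
  simp [coeff_esymShift hk (Nat.zero_le k)]

theorem natDegree_esymShift {k : ℕ} (hk : k ≤ n) (x : Fin n → ℝ) :
    (esymShift n k x).natDegree = k := by
  rw [esymShift, natDegree_hasseDeriv, natDegree_prod_X_add_C]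
  omega

theorem splits_esymShift (n k : ℕ) (x : Fin n → ℝ) : (esymShift n k x).Splits :=
  (Splits.prod fun i _ => Splits.X_add_C (x i)).hasseDeriv_real _

theorem eval_esymShift {k : ℕ} (hk : k ≤ n) (x : Fin n → ℝ) (t : ℝ) :
    (esymShift n k x).eval t = esym n k (x + t • 1) := by
  have htaylor : taylor t (∏ i, (X + C (x i))) = ∏ i, (X + C ((x + t • 1) i)) := by
    change taylorAlgHom t _ = _
    rw [map_prod]
    refine prod_congr rfl fun i _ => ?_
    rw [taylorAlgHom_apply, map_add, taylor_X, taylor_C, Pi.add_apply, Pi.smul_apply, Pi.one_apply,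
      smul_eq_mul, mul_one, C_add]
    ring
  rw [esymShift, ← taylor_coeff, htaylor, coeff_prod_X_add_C_eq_esym hk]

theorem coeff_esymShift_nonneg {k : ℕ} (hk : k ≤ n) {x : Fin n → ℝ}
    (hx : ∀ j ≤ k, 0 ≤ esym n j x) (i : ℕ) : 0 ≤ (esymShift n k x).coeff i := by
  rcases le_or_gt i k with hi | hi
  · rw [coeff_esymShift hk hi]
    exact mul_nonneg (by positivity) (hx _ (Nat.sub_le _ _))
  · rw [coeff_eq_zero_of_natDegree_lt (by rwa [natDegree_esymShift hk])]

theorem esym_pos_of_esym_nonneg {k : ℕ} (hk : k ≤ n) {x : Fin n → ℝ}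
    (hx : ∀ j ≤ k, 0 ≤ esym n j x) (hxk : 0 < esym n k x) {j : ℕ} (hj : j ≤ k) :
    0 < esym n j x := by
  have h := (splits_esymShift n k x).coeff_pos_of_coeff_nonneg (coeff_esymShift_nonneg hk hx)
    (by rwa [coeff_zero_esymShift hk]) (k := k - j) (by rw [natDegree_esymShift hk]; omega)
  rw [coeff_esymShift hk (Nat.sub_le _ _), Nat.sub_sub_self hj] at h
  exact pos_of_mul_pos_right h (by positivity)

end esym

def esymPositiveCone (n r : ℕ) : Set (Fin n → ℝ) :=
  {x | ∀ j ≤ r, 0 < esym n j x}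

section esymPositiveCone

variable {n r : ℕ}

theorem isOpen_esymPositiveCone : IsOpen (esymPositiveCone n r) := by
  simp only [esymPositiveCone, Set.ofPred_forall]
  exact (Set.finite_Iic r).isOpen_biInter fun j _ =>
    isOpen_lt continuous_const (continuous_esym n j)

theorem closure_esymPositiveCone_subset :
    closure (esymPositiveCone n r) ⊆ {x | ∀ j ≤ r, 0 ≤ esym n j x} := by
  refine closure_minimal (fun x hx j hj => (hx j hj).le) ?_
  simp only [Set.ofPred_forall]
  exact isClosed_biInter fun j _ => isClosed_le continuous_const (continuous_esym n j)

theorem one_mem_esymPositiveCone (hr : r ≤ n) : 1 ∈ esymPositiveCone n r := fun j hj => by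
  rw [esym_one]
  exact_mod_cast Nat.choose_pos (hj.trans hr)

theorem smul_mem_esymPositiveCone {x : Fin n → ℝ} (hx : x ∈ esymPositiveCone n r) {c : ℝ}
    (hc : 0 < c) : c • x ∈ esymPositiveCone n r := fun j hj => by
  rw [esym_smul]
  exact mul_pos (pow_pos hc j) (hx j hj)

theorem add_smul_one_mem_esymPositiveCone (hr : r ≤ n) {x : Fin n → ℝ}
    (hx : x ∈ esymPositiveCone n r) {t : ℝ} (ht : 0 ≤ t) : x + t • 1 ∈ esymPositiveCone n r :=
  fun j hj => by
    rw [← eval_esymShift (hj.trans hr)]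
    exact eval_pos_of_coeff_nonneg
      (coeff_esymShift_nonneg (hj.trans hr) fun i hi => (hx i (hi.trans hj)).le)
      (by rw [coeff_zero_esymShift (hj.trans hr)]; exact hx j hj) ht

theorem starConvex_esymPositiveCone (hr : r ≤ n) : StarConvex ℝ 1 (esymPositiveCone n r) := by
  refine (starConvex_iff_forall_pos (one_mem_esymPositiveCone hr)).2
    fun x hx a b ha hb _ => ?_
  have : a • (1 : Fin n → ℝ) + b • x = b • (x + (a / b) • 1) := by
    rw [smul_add, smul_smul, mul_div_cancel₀ _ hb.ne', add_comm]
  rw [this]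
  exact smul_mem_esymPositiveCone (add_smul_one_mem_esymPositiveCone hr hx (by positivity)) hb

theorem esymPositiveCone_subset_gardingCone (hr : r ≤ n) :
    esymPositiveCone n r ⊆ GardingCone n r :=
  ((starConvex_esymPositiveCone hr).isPathConnected (one_mem_esymPositiveCone hr)).isConnected
    |>.isPreconnected.subset_connectedComponentIn (one_mem_esymPositiveCone hr)
    fun _ hx => (hx r le_rfl).ne'

theorem gardingCone_subset_esymPositiveCone (hr : r ≤ n) :
    GardingCone n r ⊆ esymPositiveCone n r := by
  have hone := one_mem_esymPositiveCone hr
  refine isPreconnected_connectedComponentIn.subset_of_closure_inter_subset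
    isOpen_esymPositiveCone ⟨1, mem_connectedComponentIn (hone r le_rfl).ne', hone⟩ ?_
  rintro x ⟨hx_closure, hx_cone⟩
  have hnn := closure_esymPositiveCone_subset hx_closure
  have hne : esym n r x ≠ 0 := connectedComponentIn_subset _ _ hx_cone
  exact fun j hj => esym_pos_of_esym_nonneg hr hnn ((hnn r le_rfl).lt_of_ne' hne) hj

end esymPositiveCone

theorem gardingCone_nested_general (n r s : ℕ) (hrs : r ≤ s) (hsn : s ≤ n) :
    GardingCone n s ⊆ GardingCone n r :=
  calc GardingCone n s
      ⊆ esymPositiveCone n s := gardingCone_subset_esymPositiveCone hsn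
    _ ⊆ esymPositiveCone n r := fun _ hx j hj => hx j (hj.trans hrs)
    _ ⊆ GardingCone n r := esymPositiveCone_subset_gardingCone (hrs.trans hsn)

/-- The Gårding cones are nested decreasingly: `Γ_1 ⊃ Γ_2 ⊃ ... ⊃ Γ_n`. -/
theorem gardingCone_nested (n r s : ℕ) (hr : 1 ≤ r) (hrs : r ≤ s) (hsn : s ≤ n) :
    GardingCone n s ⊆ GardingCone n r :=
  gardingCone_nested_general n r s hrs hsn
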